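/- arXiv:1310.2475 — 2 statements merged into one kernel-verified Lean document; each statement's English description precedes it below -/
import Mathlib

section
/- Let A ∈ ℝmax^{n×n} be irreducible and let C, S, R be the CSR terms of A with respect to a completely reducible subgraph 𝒢 of the critical graph 𝒞(A) with no trivial s.c.c. Then the sequence of matrices (CS^tR)_{t≥0} is purely periodic: CS^{t+γ(𝒢)}R = CS^tR for all t ≥ 0. -/
open Classical

noncomputable section

namespace MaxPlus

/-- A square matrix over the max-plus semiring `ℝmax = ℝ ∪ {-∞}`,
represented as `WithBot ℝ` (with `⊥ = -∞`, `+` the usual addition). -/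
abbrev MPMat (n : ℕ) := Fin n → Fin n → WithBot ℝ

variable {n : ℕ}

/-- Max-plus matrix multiplication: `(A⊗B)_{ij} = max_k (a_{ik} + b_{kj})`. -/
def mpMul (A B : MPMat n) : MPMat n := fun i j => Finset.univ.sup fun k => A i k + B k j

/-- Max-plus matrix power, with `A^0` the max-plus identity. -/
def mpPow (A : MPMat n) : ℕ → MPMat n
  | 0 => fun i j => if i = j then (0 : WithBot ℝ) else ⊥
  | t + 1 => mpMul A (mpPow A t)

/-- Max-plus matrix-vector product. -/
def mpMulVec (A : MPMat n) (x : Fin n → WithBot ℝ) : Fin n → WithBot ℝ :=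
  fun i => Finset.univ.sup fun k => A i k + x k

/-- A digraph on the node set `{1,…,n}`: a set of vertices together with an
edge relation. -/
structure SubD (n : ℕ) where
  verts : Set (Fin n)
  edge : Fin n → Fin n → Prop

/-- The weighted digraph `𝒟(A)` of a max-plus matrix: all `n` nodes, with an
edge `(i,j)` whenever `a_{ij} ≠ -∞`. -/
def digr (A : MPMat n) : SubD n := ⟨Set.univ, fun i j => A i j ≠ ⊥⟩

/-- `W` (a nonempty list of nodes) is a walk in the digraph `G`. -/
def IsWalkIn (G : SubD n) (W : List (Fin n)) : Prop :=
  W ≠ [] ∧ (∀ v ∈ W, v ∈ G.verts) ∧ W.Chain' G.edge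

/-- The length of a walk: its number of edges (number of nodes minus one). -/
def elen (W : List (Fin n)) : ℕ := W.length - 1

/-- The weight `p(W)` of a walk: sum of the weights of its edges. -/
def walkWeight (A : MPMat n) (W : List (Fin n)) : WithBot ℝ :=
  ((W.zip W.tail).map fun p => A p.1 p.2).sum

/-- `W` is a cycle in `G`: a nonempty closed walk with pairwise distinct
nodes (apart from the repeated endpoint). -/
def IsCycleIn (G : SubD n) (W : List (Fin n)) : Prop :=
  IsWalkIn G W ∧ 2 ≤ W.length ∧ W.head? = W.getLast? ∧ W.dropLast.Nodup

/-- `W` is a path in `G`: a walk with no repeated node. -/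
def IsPathIn (G : SubD n) (W : List (Fin n)) : Prop :=
  IsWalkIn G W ∧ W.Nodup

/-- `v` is reachable from `u` by a (possibly empty) walk in `G`. -/
def ReachIn (G : SubD n) (u v : Fin n) : Prop :=
  ∃ W, IsWalkIn G W ∧ W.head? = some u ∧ W.getLast? = some v

/-- `u` and `v` lie in the same strongly connected component of `G`. -/
def SccEq (G : SubD n) (u v : Fin n) : Prop := ReachIn G u v ∧ ReachIn G v u

/-- The node set of the s.c.c. of `u` in `G`. -/
def sccOf (G : SubD n) (u : Fin n) : Set (Fin n) := {v | SccEq G u v}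

/-- The s.c.c. of `u` in `G`, as a digraph. -/
def sccSub (G : SubD n) (u : Fin n) : SubD n :=
  ⟨sccOf G u, fun a b => G.edge a b ∧ a ∈ sccOf G u ∧ b ∈ sccOf G u⟩

/-- `H` is a subgraph of `G`. -/
def SubLE (H G : SubD n) : Prop := H.verts ⊆ G.verts ∧ ∀ u v, H.edge u v → G.edge u v

/-- `G` is completely reducible: there are no edges between distinct s.c.c.'s,
i.e. every edge lies inside an s.c.c. -/
def CompletelyReducible (G : SubD n) : Prop := ∀ u v, G.edge u v → ReachIn G v u

/-- `G` has no trivial s.c.c.: every node lies on a cycle of `G`. -/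
def NoTrivialScc (G : SubD n) : Prop := ∀ v ∈ G.verts, ∃ W, IsCycleIn G W ∧ v ∈ W

/-- `A` is irreducible: `𝒟(A)` is strongly connected. -/
def IrreducibleMat (A : MPMat n) : Prop := ∀ i j : Fin n, ReachIn (digr A) i j

/-- `W` is a closed walk at node `v` in `G`. -/
def IsClosedWalkAt (G : SubD n) (v : Fin n) (W : List (Fin n)) : Prop :=
  IsWalkIn G W ∧ W.head? = some v ∧ W.getLast? = some v

/-- The greatest common divisor of a set of naturals (0 for the empty set). -/
def setGcd (S : Set ℕ) : ℕ :=
  sInf {d | (∀ s ∈ S, d ∣ s) ∧ ∀ e, (∀ s ∈ S, e ∣ s) → e ∣ d}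

/-- The least common multiple of a set of naturals: the least positive common
multiple (0 if there is none). -/
def setLcm (S : Set ℕ) : ℕ := sInf {m | 0 < m ∧ ∀ s ∈ S, s ∣ m}

/-- The cyclicity of the s.c.c. of `v` in `G`: the gcd of the lengths of the
closed walks of `G` through `v` (0 if `v` lies on no nonempty closed walk). -/
def sccCyclicity (G : SubD n) (v : Fin n) : ℕ :=
  setGcd {l | 0 < l ∧ ∃ W, IsClosedWalkAt G v W ∧ elen W = l}

/-- The cyclicity of a digraph: the lcm of the cyclicities of its
(nontrivial) s.c.c.'s. -/
def graphCyclicity (G : SubD n) : ℕ :=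
  setLcm {c | ∃ v ∈ G.verts, c = sccCyclicity G v ∧ 0 < c}

/-- The walk `W` has mean weight `m`, i.e. `p(W) = l(W)·m` (finitely). -/
def meanIs (A : MPMat n) (W : List (Fin n)) (m : ℝ) : Prop :=
  walkWeight A W = (((elen W : ℝ) * m : ℝ) : WithBot ℝ)

/-- `lam` is the maximum cycle mean `λ(A)` of `A`: it is the mean of some
cycle of `𝒟(A)` and no cycle has a larger mean.  (Its existence is
equivalent to `𝒟(A)` containing a cycle, i.e. `λ(A) ≠ -∞`.) -/
def IsMaxCycleMean (A : MPMat n) (lam : ℝ) : Prop :=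
  (∃ W, IsCycleIn (digr A) W ∧ meanIs A W lam) ∧
  ∀ W m, IsCycleIn (digr A) W → meanIs A W m → m ≤ lam

/-- The set of critical nodes: nodes on some cycle of mean `λ(A)`. -/
def critNodes (A : MPMat n) (lam : ℝ) : Set (Fin n) :=
  {v | ∃ W, IsCycleIn (digr A) W ∧ meanIs A W lam ∧ v ∈ W}

/-- Critical edges: edges of some cycle of mean `λ(A)`. -/
def critEdges (A : MPMat n) (lam : ℝ) (u v : Fin n) : Prop :=
  ∃ W, IsCycleIn (digr A) W ∧ meanIs A W lam ∧ (u, v) ∈ W.zip W.tail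

/-- The critical graph `𝒞(A)`. -/
def critSub (A : MPMat n) (lam : ℝ) : SubD n := ⟨critNodes A lam, critEdges A lam⟩

/-- Add the real constant `c` to every entry. -/
def shiftMat (A : MPMat n) (c : ℝ) : MPMat n := fun i j => A i j + (c : WithBot ℝ)

/-- The max-plus Kleene star `X^* = I ⊕ X ⊕ X² ⊕ ⋯` (entrywise supremum). -/
def mpStar (X : MPMat n) : MPMat n := fun i j => ⨆ t : ℕ, mpPow X t i j

/-- The matrix `M = (((-λ)⊗A)^{γ(𝒢)})^*` used to define the CSR terms. -/
def csrM (A : MPMat n) (lam : ℝ) (G : SubD n) : MPMat n :=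
  mpStar (mpPow (shiftMat A (-lam)) (graphCyclicity G))

/-- The `C` term of the CSR expansion of `A` w.r.t. the subgraph `G`. -/
def csrC (A : MPMat n) (lam : ℝ) (G : SubD n) : MPMat n :=
  fun i j => if j ∈ G.verts then csrM A lam G i j else ⊥

/-- The `R` term of the CSR expansion of `A` w.r.t. the subgraph `G`. -/
def csrR (A : MPMat n) (lam : ℝ) (G : SubD n) : MPMat n :=
  fun i j => if i ∈ G.verts then csrM A lam G i j else ⊥

/-- The `S` term of the CSR expansion of `A` w.r.t. the subgraph `G`. -/
def csrS (A : MPMat n) (lam : ℝ) (G : SubD n) : MPMat n :=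
  fun i j => if G.edge i j then A i j + ((-lam : ℝ) : WithBot ℝ) else ⊥

/-- The matrix `C S^t R`. -/
def csr (A : MPMat n) (lam : ℝ) (G : SubD n) (t : ℕ) : MPMat n :=
  mpMul (mpMul (csrC A lam G) (mpPow (csrS A lam G) t)) (csrR A lam G)

/-- `G` is a representing subgraph of the critical graph `crit`: a completely
reducible subgraph (with no trivial s.c.c.) such that every s.c.c. of `crit`
contains exactly one s.c.c. of `G`. -/
structure IsRepresenting (crit G : SubD n) : Prop where
  le : SubLE G crit
  compRed : CompletelyReducible G
  noTriv : NoTrivialScc G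
  covers : ∀ u ∈ crit.verts, ∃ v ∈ G.verts, SccEq crit u v
  unique : ∀ v ∈ G.verts, ∀ w ∈ G.verts, SccEq crit v w → SccEq G v w

/-- `B` is subordinate to `A`: obtained from `A` by setting some entries to `-∞`. -/
def Subordinate (B A : MPMat n) : Prop := ∀ i j, B i j = A i j ∨ B i j = ⊥

/-- Set to `-∞` all entries in the rows and columns indexed by `S`. -/
def zeroRC (A : MPMat n) (S : Set (Fin n)) : MPMat n :=
  fun i j => if i ∈ S ∨ j ∈ S then ⊥ else A i j

/-- The Nachtigall scheme: zero out the rows and columns of critical nodes. -/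
def bN (A : MPMat n) (lam : ℝ) : MPMat n := zeroRC A (critNodes A lam)

/-- `V` is a max-balancing of `A`: `V = D⁻¹((-λ(A))⊗A)D` with all entries `≤ 0`,
entries `0` on critical edges, and every edge of `𝒟(V)` lies on a cycle all of
whose edges have weight at least that of the given edge (cycle cover). -/
def IsMaxBalancing (A : MPMat n) (lam : ℝ) (V : MPMat n) : Prop :=
  (∃ d : Fin n → ℝ, ∀ i j, V i j = A i j + ((d j - d i - lam : ℝ) : WithBot ℝ)) ∧
  (∀ i j, V i j ≤ (0 : WithBot ℝ)) ∧
  (∀ i j, critEdges A lam i j → V i j = (0 : WithBot ℝ)) ∧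
  (∀ i j, V i j ≠ ⊥ →
    ∃ W, IsCycleIn (digr V) W ∧ (i, j) ∈ W.zip W.tail ∧ ∀ p ∈ W.zip W.tail, V i j ≤ V p.1 p.2)

/-- The Hartmann-Arguelles threshold graph `Θ^{ha}(μ)`: induced by the edges
with `v_{ij} ≥ μ`; by convention `Θ^{ha}(-∞) = 𝒟(A)`. -/
def thrHA (A V : MPMat n) (μ : WithBot ℝ) : SubD n :=
  if μ = ⊥ then digr A
  else ⟨{u | ∃ w, μ ≤ V u w ∨ μ ≤ V w u}, fun u v => μ ≤ V u v⟩

/-- The cycle threshold graph `Θ^{ct}(μ)`: induced by all nodes and edges of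
cycles of mean weight `≥ μ`; by convention `Θ^{ct}(-∞) = 𝒟(A)`. -/
def thrCT (A : MPMat n) (μ : WithBot ℝ) : SubD n :=
  if μ = ⊥ then digr A
  else ⟨{v | ∃ W m, IsCycleIn (digr A) W ∧ meanIs A W m ∧ μ ≤ (m : WithBot ℝ) ∧ v ∈ W},
        fun u v => ∃ W m, IsCycleIn (digr A) W ∧ meanIs A W m ∧ μ ≤ (m : WithBot ℝ) ∧
          (u, v) ∈ W.zip W.tail⟩

/-- `Θ` has an s.c.c. containing no s.c.c. of `crit`. -/
def HasFreeScc (Θ crit : SubD n) : Prop :=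
  ∃ u ∈ Θ.verts, ¬ ∃ w ∈ crit.verts, sccOf crit w ⊆ sccOf Θ u

/-- `μ` is the greatest value `≤ λ(A)` satisfying `P` (or `-∞` if there is
no such value). -/
def IsThrMax (P : WithBot ℝ → Prop) (lam : ℝ) (μ : WithBot ℝ) : Prop :=
  (μ ≤ (lam : WithBot ℝ) ∧ P μ ∧ ∀ μ', μ' ≤ (lam : WithBot ℝ) → P μ' → μ' ≤ μ) ∨
  (μ = ⊥ ∧ ∀ μ', μ' ≤ (lam : WithBot ℝ) → ¬ P μ')

/-- `μ = μ^{ha}` for the max-balancing `V` of `A`. -/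
def IsMuHA (A : MPMat n) (lam : ℝ) (V : MPMat n) (μ : WithBot ℝ) : Prop :=
  IsThrMax (fun m => HasFreeScc (thrHA A V m) (critSub A lam)) lam μ

/-- `μ = μ^{ct}` for `A`. -/
def IsMuCT (A : MPMat n) (lam : ℝ) (μ : WithBot ℝ) : Prop :=
  IsThrMax (fun m => HasFreeScc (thrCT A m) (critSub A lam)) lam μ

/-- The union of the s.c.c.'s of `Θ` intersecting the node set `crit`. -/
def unionSccMeeting (Θ : SubD n) (crit : Set (Fin n)) : Set (Fin n) :=
  {v | v ∈ Θ.verts ∧ ∃ w ∈ crit, SccEq Θ v w}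

/-- The node set `𝒢^{ha}` of the Hartmann-Arguelles scheme. -/
def haNodes (A V : MPMat n) (lam : ℝ) (μ : WithBot ℝ) : Set (Fin n) :=
  unionSccMeeting (thrHA A V μ) (critNodes A lam)

/-- The matrix `B^{HA}` of the Hartmann-Arguelles scheme. -/
def bHA (A V : MPMat n) (lam : ℝ) (μ : WithBot ℝ) : MPMat n :=
  zeroRC A (haNodes A V lam μ)

/-- The node set `𝒢^{ct}` of the cycle threshold scheme. -/
def ctNodes (A : MPMat n) (lam : ℝ) (μ : WithBot ℝ) : Set (Fin n) :=
  unionSccMeeting (thrCT A μ) (critNodes A lam)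

/-- The matrix `B^{ct}` of the cycle threshold scheme. -/
def bCT (A : MPMat n) (lam : ℝ) (μ : WithBot ℝ) : MPMat n :=
  zeroRC A (ctNodes A lam μ)

/-- The graph `𝒢^{ct}`: the union of the s.c.c.'s of `Θ^{ct}(μ^{ct})`
intersecting `𝒞(A)`, as a digraph. -/
def ctSub (A : MPMat n) (lam : ℝ) (μ : WithBot ℝ) : SubD n :=
  ⟨ctNodes A lam μ,
   fun u v => (thrCT A μ).edge u v ∧ u ∈ ctNodes A lam μ ∧ v ∈ ctNodes A lam μ⟩

/-- The circumference of `G`: the greatest length of a cycle of `G`. -/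
def circumf (G : SubD n) : ℕ := sSup {l | ∃ W, IsCycleIn G W ∧ W.length = l + 1}

/-- The cab driver's diameter of `G`: the greatest length of a path of `G`. -/
def cabDiam (G : SubD n) : ℕ := sSup {l | ∃ W, IsPathIn G W ∧ W.length = l + 1}

/-- The girth of the s.c.c. of `v` in `G`: the least length of a cycle lying
in the s.c.c. of `v`. -/
def sccGirth (G : SubD n) (v : Fin n) : ℕ :=
  sInf {l | 0 < l ∧ ∃ W, IsCycleIn G W ∧ W.length = l + 1 ∧ ∀ u ∈ W, SccEq G v u}

/-- The max-girth of `G`: the greatest girth of an s.c.c. of `G`. -/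
def maxGirth (G : SubD n) : ℕ := sSup {g | ∃ v ∈ G.verts, 0 < g ∧ g = sccGirth G v}

/-- The max-cyclicity of `G`: the greatest cyclicity of an s.c.c. of `G`. -/
def maxCyclicity (G : SubD n) : ℕ := sSup {c | ∃ v ∈ G.verts, 0 < c ∧ c = sccCyclicity G v}

/-- The Wielandt number: `Wi(n) = (n-1)² + 1` for `n > 1`, `Wi(1) = 0`. -/
def wielandt (k : ℕ) : ℕ := if k ≤ 1 then 0 else (k - 1) ^ 2 + 1

/-- The set of finite entries of `A`. -/
def finEntries (A : MPMat n) : Set ℝ := {x | ∃ i j, A i j = (x : WithBot ℝ)}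

/-- The least finite entry of `A`. -/
def minEnt (A : MPMat n) : ℝ := sInf (finEntries A)

/-- The greatest finite entry of `A`. -/
def maxEnt (A : MPMat n) : ℝ := sSup (finEntries A)

/-- `‖A‖`: the difference between the greatest and least finite entries. -/
def matNorm (A : MPMat n) : ℝ := maxEnt A - minEnt A

/-- `n_B`: the size of the smallest square submatrix of `B` containing all
finite entries of `B`. -/
def nB (B : MPMat n) : ℕ := Set.ncard {i | ∃ j, B i j ≠ ⊥ ∨ B j i ≠ ⊥}

/-- `‖v‖`: the difference between the greatest and least entries of `v`. -/
def vecNorm (v : Fin n → ℝ) : ℝ := sSup (Set.range v) - sInf (Set.range v)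

/-- The exploration penalty `ep^γ(i)` (w.r.t. the graph `crit`): the least `T`
such that for every multiple `t` of `γ` with `t ≥ T` there is a closed walk of
length `t` at `i` in `crit`. -/
def epAt (crit : SubD n) (γ : ℕ) (i : Fin n) : ℕ :=
  sInf {T | ∀ t, γ ∣ t → T ≤ t → ∃ W, IsClosedWalkAt crit i W ∧ elen W = t}

/-- The exploration penalty `ep^γ(S)`: the maximum of `ep^γ(i)` over `i ∈ S`. -/
def epOn (crit : SubD n) (γ : ℕ) (S : Set (Fin n)) : ℕ := sSup {e | ∃ i ∈ S, e = epAt crit γ i}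

/-- `ep(𝒞(A))`: the maximum over the s.c.c.'s `𝒞_l` of `crit` of
`ep^{γ(𝒞_l)}(𝒞_l)`. -/
def epCrit (crit : SubD n) : ℕ :=
  sSup {e | ∃ i ∈ crit.verts, e = epAt crit (sccCyclicity crit i) i}

/-- The weak CSR expansion `A^t = λ^{⊗t}⊗(CS^tR) ⊕ B^t` holds at time `t`
(with CSR terms taken w.r.t. the subgraph `G`). -/
def weakCSReq (A B : MPMat n) (lam : ℝ) (G : SubD n) (t : ℕ) : Prop :=
  ∀ i j, mpPow A t i j = max (csr A lam G t i j + (((t : ℝ) * lam : ℝ) : WithBot ℝ)) (mpPow B t i j)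

/-- The domination `λ^{⊗t}⊗(CS^tR) ≥ B^t` holds at time `t`. -/
def T2eq (A B : MPMat n) (lam : ℝ) (G : SubD n) (t : ℕ) : Prop :=
  ∀ i j, mpPow B t i j ≤ csr A lam G t i j + (((t : ℝ) * lam : ℝ) : WithBot ℝ)

/-- The domination `λ^{⊗t}⊗(CS^tRv) ≥ B^t v` holds at time `t`. -/
def T2veq (A B : MPMat n) (lam : ℝ) (G : SubD n) (v : Fin n → ℝ) (t : ℕ) : Prop :=
  ∀ i, mpMulVec (mpPow B t) (fun j => (v j : WithBot ℝ)) i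
      ≤ mpMulVec (csr A lam G t) (fun j => (v j : WithBot ℝ)) i + (((t : ℝ) * lam : ℝ) : WithBot ℝ)

/-- One step of removing a (nonempty) closed subwalk from a walk. -/
def RemoveStep (W V : List (Fin n)) : Prop :=
  ∃ (pre mid post : List (Fin n)) (x : Fin n),
    W = pre ++ x :: mid ++ x :: post ∧ V = pre ++ x :: post

/-- One step of inserting a cycle of `C` into a walk (at an occurrence of a
node of that cycle). -/
def InsertStep (C : SubD n) (W V : List (Fin n)) : Prop :=
  ∃ (pre post mid : List (Fin n)) (x : Fin n),
    W = pre ++ x :: post ∧ V = pre ++ x :: mid ++ x :: post ∧ IsCycleIn C (x :: mid ++ [x])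

/-- `V` is obtained from `W` by removing cycles. -/
def RemOnly : List (Fin n) → List (Fin n) → Prop := Relation.ReflTransGen RemoveStep

/-- `V` is obtained from `W` by removing cycles and possibly inserting cycles
of `C`. -/
def RemIns (C : SubD n) : List (Fin n) → List (Fin n) → Prop :=
  Relation.ReflTransGen fun W V => RemoveStep W V ∨ InsertStep C W V

/-- `V` is obtained from `W` by removing at least one cycle and possibly
inserting cycles of `C`. -/
def RemInsStrict (C : SubD n) (W V : List (Fin n)) : Prop :=
  ∃ W₁ W₂, RemIns C W W₁ ∧ RemoveStep W₁ W₂ ∧ RemIns C W₂ V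

/-- `T` witnesses the cycle removal threshold `T_cr^γ(C) ≤ T` in the digraph
`G`: every walk of `G` through `C` of length `≥ T` can be reduced (removing
cycles, possibly inserting cycles of `C`) to a walk through `C` with the same
endpoints, the same length mod `γ`, and length `≤ T`. -/
def TcrProp (G C : SubD n) (γ T : ℕ) : Prop :=
  ∀ W, IsWalkIn G W → (∃ v ∈ C.verts, v ∈ W) → T ≤ elen W →
    ∃ V, RemIns C W V ∧ IsWalkIn G V ∧ (∃ v ∈ C.verts, v ∈ V) ∧
      V.head? = W.head? ∧ V.getLast? = W.getLast? ∧ elen V ≡ elen W [MOD γ] ∧ elen V ≤ T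

/-- `T` witnesses the strict cycle removal threshold `T̃_cr^γ(C) ≤ T`. -/
def TcrStrictProp (G C : SubD n) (γ T : ℕ) : Prop :=
  ∀ W, IsWalkIn G W → (∃ v ∈ C.verts, v ∈ W) → T ≤ elen W →
    ∃ V, RemInsStrict C W V ∧ IsWalkIn G V ∧ (∃ v ∈ C.verts, v ∈ V) ∧
      V.head? = W.head? ∧ V.getLast? = W.getLast? ∧ elen V ≡ elen W [MOD γ] ∧ elen V ≤ T

/-- The cycle removal threshold `T_cr^γ(C)` of the subgraph `C` in `G`. -/
def Tcr (G C : SubD n) (γ : ℕ) : ℕ := sInf {T | TcrProp G C γ T}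

/-- The strict cycle removal threshold `T̃_cr^γ(C)` of the subgraph `C` in `G`. -/
def TcrStrict (G C : SubD n) (γ : ℕ) : ℕ := sInf {T | TcrStrictProp G C γ T}

/-- The subgraph formed by the nodes and edges of the walk `W`. -/
def cycleSub (W : List (Fin n)) : SubD n :=
  ⟨{v | v ∈ W}, fun a b => (a, b) ∈ W.zip W.tail⟩

/-- The single-node subgraph `{i}` (with no edges). -/
def singleSub (i : Fin n) : SubD n := ⟨{i}, fun _ _ => False⟩

/-- `λ(M)` as an element of `ℝmax` (`-∞` if `𝒟(M)` has no cycle). -/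
def lamW (M : MPMat n) : WithBot ℝ :=
  sSup {x : WithBot ℝ | ∃ W m, IsCycleIn (digr M) W ∧ meanIs M W m ∧ x = (m : WithBot ℝ)}

end MaxPlus

/-!
Write `B = (-λ) ⊗ A`, `γ = γ(𝒢)` and `M = (B^γ)^*`. Since `C S^(t+γ) R = (C S^γ) S^t R`, it
suffices to show `C S^γ = C` when `γ > 0`.

Closed walks of `𝒟(B)` have weight `≤ 0` (they decompose into cycles, of mean `≤ 0`), and by
irreducibility each entry of `B^t` is bounded in `t`; so `M` is an honest supremum and
`M_ik + (B^(γs))_kj ≤ M_ij`. As `S ≤ B` entrywise and a finite entry `(S^γ)_kj` forces `j ∈ 𝒢`,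
this gives `C S^γ ≤ C`.

Conversely, every edge of `𝒢` lies on a critical cycle, whose remaining arc leads back with weight
exactly the negative of the edge's; chaining these arcs shows that closed walks of `𝒢` have weight
`≥ 0`. A node `j` of `𝒢` lies on such a closed walk of some length `L ≥ 1`, so
`((S^γ)^L)_jj ≥ 0`; splitting off the last factor gives `x` with
`((S^γ)^(L-1))_jx + (S^γ)_xj ≥ 0`, whence `M_ij ≤ M_ix + (S^γ)_xj`, i.e. `C ≤ C S^γ`.
-/

theorem List.exists_eq_append_of_not_nodup {α : Type*} {l : List α} (h : ¬l.Nodup) :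
    ∃ l₁ x l₂ l₃, l = l₁ ++ x :: (l₂ ++ x :: l₃) := by
  induction l with
  | nil => simp at h
  | cons a t ih =>
    by_cases ha : a ∈ t
    · obtain ⟨l₂, l₃, rfl⟩ := List.append_of_mem ha
      exact ⟨[], a, l₂, l₃, rfl⟩
    · obtain ⟨l₁, x, l₂, l₃, rfl⟩ := ih fun hn => h (List.nodup_cons.mpr ⟨ha, hn⟩)
      exact ⟨a :: l₁, x, l₂, l₃, rfl⟩

theorem List.exists_eq_append_of_mem_zip_tail {α : Type*} {a b : α} {l : List α}
    (h : (a, b) ∈ l.zip l.tail) : ∃ l₁ l₂, l = l₁ ++ a :: b :: l₂ := by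
  induction l using List.twoStepInduction with
  | nil | singleton => simp at h
  | cons_cons c d l _ ih =>
    rcases List.mem_cons.mp h with h | h
    · obtain ⟨rfl, rfl⟩ := Prod.mk.inj h
      exact ⟨[], l, rfl⟩
    · obtain ⟨l₁, l₂, hl⟩ := ih d h
      exact ⟨c :: l₁, l₂, by rw [hl]; rfl⟩

namespace MaxPlus

variable {n : ℕ}

section Algebra

variable (X Y : MPMat n)

theorem le_mpMul_apply (i k j : Fin n) : X i k + Y k j ≤ mpMul X Y i j :=
  Finset.le_sup (f := fun k => X i k + Y k j) (Finset.mem_univ k)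

theorem exists_mpMul_apply_eq (i j : Fin n) : ∃ k, mpMul X Y i j = X i k + Y k j := by
  obtain ⟨k, -, hk⟩ := Finset.exists_mem_eq_sup Finset.univ ⟨i, Finset.mem_univ i⟩
    (fun k => X i k + Y k j)
  exact ⟨k, hk⟩

theorem exists_ne_bot_of_mpMul_apply_ne_bot {i j : Fin n} (h : mpMul X Y i j ≠ ⊥) :
    ∃ k, X i k ≠ ⊥ ∧ Y k j ≠ ⊥ := by
  obtain ⟨k, hk⟩ := exists_mpMul_apply_eq X Y i j
  exact ⟨k, WithBot.add_ne_bot.mp (hk ▸ h)⟩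

variable {X Y} in
theorem mpMul_mono {X' Y' : MPMat n} (hX : X ≤ X') (hY : Y ≤ Y') : mpMul X Y ≤ mpMul X' Y' :=
  fun i j => Finset.sup_mono_fun fun k _ => add_le_add (hX i k) (hY k j)

theorem mpMul_assoc (Z : MPMat n) : mpMul (mpMul X Y) Z = mpMul X (mpMul Y Z) := by
  funext i j
  apply le_antisymm
  · obtain ⟨l, hl⟩ := exists_mpMul_apply_eq (mpMul X Y) Z i j
    obtain ⟨k, hk⟩ := exists_mpMul_apply_eq X Y i l
    calc mpMul (mpMul X Y) Z i j = X i k + (Y k l + Z l j) := by rw [hl, hk, add_assoc]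
      _ ≤ X i k + mpMul Y Z k j := add_le_add_right (le_mpMul_apply Y Z k l j) _
      _ ≤ _ := le_mpMul_apply _ _ _ _ _
  · obtain ⟨k, hk⟩ := exists_mpMul_apply_eq X (mpMul Y Z) i j
    obtain ⟨l, hl⟩ := exists_mpMul_apply_eq Y Z k j
    calc mpMul X (mpMul Y Z) i j = X i k + Y k l + Z l j := by rw [hk, hl, add_assoc]
      _ ≤ mpMul X Y i l + Z l j := add_le_add_left (le_mpMul_apply X Y i k l) _
      _ ≤ _ := le_mpMul_apply _ _ _ _ _

theorem mpPow_zero_mpMul : mpMul (mpPow Y 0) X = X := by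
  funext i j
  apply le_antisymm
  · refine Finset.sup_le fun k _ => ?_
    by_cases hik : i = k <;> simp [mpPow, hik]
  · simpa [mpPow] using le_mpMul_apply (mpPow Y 0) X i i j

theorem mpMul_mpPow_zero : mpMul X (mpPow Y 0) = X := by
  funext i j
  apply le_antisymm
  · refine Finset.sup_le fun k _ => ?_
    by_cases hkj : k = j <;> simp [mpPow, hkj]
  · simpa [mpPow] using le_mpMul_apply X (mpPow Y 0) i j j

theorem mpPow_add (a b : ℕ) : mpPow X (a + b) = mpMul (mpPow X a) (mpPow X b) := by
  induction a with
  | zero => rw [zero_add, mpPow_zero_mpMul]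
  | succ a ih =>
    rw [Nat.succ_add]
    change mpMul X (mpPow X (a + b)) = mpMul (mpMul X (mpPow X a)) (mpPow X b)
    rw [ih, mpMul_assoc]

theorem mpPow_one : mpPow X 1 = X := mpMul_mpPow_zero X X

theorem mpPow_succ' (t : ℕ) : mpPow X (t + 1) = mpMul (mpPow X t) X := by
  rw [mpPow_add, mpPow_one]

theorem mpPow_mul (a t : ℕ) : mpPow X (a * t) = mpPow (mpPow X a) t := by
  induction t with
  | zero => rfl
  | succ t ih => rw [Nat.mul_succ, add_comm, mpPow_add, ih]; rfl

variable {X Y} in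
theorem mpPow_mono (h : X ≤ Y) (t : ℕ) : mpPow X t ≤ mpPow Y t := by
  induction t with
  | zero => exact le_rfl
  | succ t ih => exact mpMul_mono h ih

theorem mpPow_apply_self_nonneg {j : Fin n} (h : 0 ≤ X j j) (t : ℕ) : 0 ≤ mpPow X t j j := by
  induction t with
  | zero => simp [mpPow]
  | succ t ih => exact (add_nonneg h ih).trans (le_mpMul_apply _ _ _ _ _)

theorem exists_add_mpPow_nonneg {S B : MPMat n}
    (hS : ∀ u w, S u w ≠ ⊥ → ∃ k, 0 ≤ S u w + mpPow B k w u) (t : ℕ) {u v : Fin n}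
    (h : mpPow S t u v ≠ ⊥) : ∃ k, 0 ≤ mpPow S t u v + mpPow B k v u := by
  induction t generalizing u with
  | zero =>
    obtain rfl : u = v := by by_contra huv; simp [mpPow, huv] at h
    exact ⟨0, by simp [mpPow]⟩
  | succ t ih =>
    obtain ⟨w, hw⟩ : ∃ w, mpPow S (t + 1) u v = S u w + mpPow S t w v :=
      exists_mpMul_apply_eq S (mpPow S t) u v
    obtain ⟨huw, hwv⟩ := WithBot.add_ne_bot.mp (hw ▸ h)
    obtain ⟨k₁, hk₁⟩ := hS u w huw
    obtain ⟨k₂, hk₂⟩ := ih hwv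
    refine ⟨k₂ + k₁, ?_⟩
    calc 0 ≤ (S u w + mpPow B k₁ w u) + (mpPow S t w v + mpPow B k₂ v w) :=
          add_nonneg hk₁ hk₂
      _ = (S u w + mpPow S t w v) + (mpPow B k₂ v w + mpPow B k₁ w u) := by abel
      _ ≤ _ := by
        rw [hw, mpPow_add]
        exact add_le_add_right (le_mpMul_apply _ _ _ _ _) _

end Algebra

section Walks

variable (X : MPMat n)

theorem walkWeight_cons_cons (a b : Fin n) (l : List (Fin n)) :
    walkWeight X (a :: b :: l) = X a b + walkWeight X (b :: l) := by
  simp [walkWeight]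

theorem walkWeight_singleton (a : Fin n) : walkWeight X [a] = 0 := rfl

theorem elen_cons_cons (a b : Fin n) (l : List (Fin n)) :
    elen (a :: b :: l) = elen (b :: l) + 1 := by
  simp [elen]

theorem walkWeight_append_cons (l₁ l₂ : List (Fin n)) (x : Fin n) :
    walkWeight X (l₁ ++ x :: l₂) = walkWeight X (l₁ ++ [x]) + walkWeight X (x :: l₂) := by
  induction l₁ with
  | nil => simp [walkWeight]
  | cons a l₁ ih =>
    cases l₁ with
    | nil => simp [walkWeight_cons_cons, walkWeight_singleton]
    | cons b l₁ =>
      simp only [List.cons_append, walkWeight_cons_cons] at ih ⊢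
      rw [ih, add_assoc]

theorem walkWeight_splice (l₁ l₂ r : List (Fin n)) (x : Fin n) :
    walkWeight X (l₁ ++ x :: (l₂ ++ x :: r)) =
      walkWeight X (l₁ ++ x :: r) + walkWeight X (x :: l₂ ++ [x]) := by
  rw [walkWeight_append_cons X l₁, walkWeight_append_cons X l₁ r,
    ← List.cons_append (a := x) (as := l₂) (bs := x :: r),
    walkWeight_append_cons X (x :: l₂) r]
  abel

theorem walkWeight_ne_bot {W : List (Fin n)} (hW : W.IsChain (fun a b => X a b ≠ ⊥)) :
    walkWeight X W ≠ ⊥ := by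
  induction W using List.twoStepInduction with
  | nil | singleton => simp [walkWeight]
  | cons_cons a b l _ ih =>
    obtain ⟨hab, hbl⟩ := List.isChain_cons_cons.mp hW
    rw [walkWeight_cons_cons]
    exact WithBot.add_ne_bot.mpr ⟨hab, ih b hbl⟩

theorem walkWeight_le_mpPow {W : List (Fin n)} {i j : Fin n} (hi : W.head? = some i)
    (hj : W.getLast? = some j) : walkWeight X W ≤ mpPow X (elen W) i j := by
  induction W generalizing i with
  | nil => simp at hi
  | cons a l ih =>
    obtain rfl : a = i := by simpa using hi
    cases l with
    | nil =>
      obtain rfl : a = j := by simpa using hj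
      simp [walkWeight, elen, mpPow]
    | cons b l =>
      rw [walkWeight_cons_cons, elen_cons_cons]
      exact (add_le_add_right (ih rfl (by simpa using hj)) _).trans (le_mpMul_apply _ _ _ _ _)

theorem exists_walk_of_mpPow_ne_bot {t : ℕ} {i j : Fin n} (h : mpPow X t i j ≠ ⊥) :
    ∃ W : List (Fin n), W.head? = some i ∧ W.getLast? = some j ∧
      W.IsChain (fun a b => X a b ≠ ⊥) ∧ walkWeight X W = mpPow X t i j := by
  induction t generalizing i with
  | zero =>
    obtain rfl : i = j := by by_contra hij; simp [mpPow, hij] at h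
    exact ⟨[i], rfl, rfl, List.isChain_singleton i, by simp [walkWeight, mpPow]⟩
  | succ t ih =>
    obtain ⟨k, hk⟩ : ∃ k, mpPow X (t + 1) i j = X i k + mpPow X t k j :=
      exists_mpMul_apply_eq X (mpPow X t) i j
    obtain ⟨hik, hkj⟩ := WithBot.add_ne_bot.mp (hk ▸ h)
    obtain ⟨W, hWi, hWj, hWc, hWw⟩ := ih hkj
    obtain ⟨l, rfl⟩ : ∃ l, W = k :: l := by
      cases W with
      | nil => simp at hWi
      | cons a l => exact ⟨l, by simpa using hWi⟩
    refine ⟨i :: k :: l, rfl, ?_, List.isChain_cons_cons.mpr ⟨hik, hWc⟩, ?_⟩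
    · simpa using hWj
    · rw [walkWeight_cons_cons, hWw]
      exact hk.symm

theorem exists_mpPow_ne_bot_of_reachIn {G : SubD n} (hG : ∀ a b, G.edge a b → X a b ≠ ⊥)
    {i j : Fin n} (h : ReachIn G i j) : ∃ t, mpPow X t i j ≠ ⊥ := by
  obtain ⟨W, hW, hi, hj⟩ := h
  have hWc : W.IsChain (fun a b => X a b ≠ ⊥) := hW.2.2.imp fun a b h => hG a b h
  exact ⟨elen W, ne_bot_of_le_ne_bot (walkWeight_ne_bot X hWc) (walkWeight_le_mpPow X hi hj)⟩

theorem walkWeight_shiftMat (c : ℝ) (W : List (Fin n)) :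
    walkWeight (shiftMat X c) W = walkWeight X W + ((elen W * c : ℝ) : WithBot ℝ) := by
  induction W using List.twoStepInduction with
  | nil | singleton => simp [walkWeight, elen]
  | cons_cons a b l _ ih =>
    rw [walkWeight_cons_cons, walkWeight_cons_cons, ih b, elen_cons_cons, shiftMat,
      Nat.cast_succ, add_mul, one_mul, WithBot.coe_add]
    abel

end Walks

theorem add_coe_le_iff_le_add_coe_neg {x y : WithBot ℝ} {c : ℝ} :
    x + c ≤ y ↔ x ≤ y + ((-c : ℝ) : WithBot ℝ) := by
  conv_rhs => rw [← WithBot.add_le_add_iff_right (WithBot.coe_ne_bot (a := c)), add_assoc,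
    ← WithBot.coe_add, neg_add_cancel, WithBot.coe_zero, add_zero]

section Star

variable {N : MPMat n} (hN : ∀ i j, BddAbove (Set.range fun t => mpPow N t i j))
include hN

theorem mpPow_le_mpStar (t : ℕ) (i j : Fin n) : mpPow N t i j ≤ mpStar N i j :=
  le_ciSup (hN i j) t

theorem mpStar_add_mpPow_le (s : ℕ) (i k j : Fin n) :
    mpStar N i k + mpPow N s k j ≤ mpStar N i j := by
  rcases eq_or_ne (mpPow N s k j) ⊥ with h | h
  · simp [h]
  obtain ⟨c, hc⟩ := WithBot.ne_bot_iff_exists.mp h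
  rw [← hc, add_coe_le_iff_le_add_coe_neg]
  refine ciSup_le fun t => add_coe_le_iff_le_add_coe_neg.mp ?_
  calc mpPow N t i k + c ≤ mpPow N (t + s) i j := by
        rw [hc, mpPow_add]; exact le_mpMul_apply _ _ _ _ _
    _ ≤ mpStar N i j := mpPow_le_mpStar hN _ _ _

end Star

theorem bddAbove_range_mpPow_mpPow {X : MPMat n} {i j : Fin n}
    (h : BddAbove (Set.range fun t => mpPow X t i j)) (p : ℕ) :
    BddAbove (Set.range fun t => mpPow (mpPow X p) t i j) :=
  h.mono (Set.range_subset_iff.mpr fun t => Set.mem_range.mpr ⟨p * t, by rw [mpPow_mul]⟩)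

section Critical

variable {A : MPMat n} {lam : ℝ}

theorem shiftMat_ne_bot_iff {c : ℝ} {a b : Fin n} :
    shiftMat A c a b ≠ ⊥ ↔ A a b ≠ ⊥ := by
  simp [shiftMat]

theorem ne_bot_of_critEdges {a b : Fin n} (h : critEdges A lam a b) : A a b ≠ ⊥ := by
  obtain ⟨Z, hZ, -, hab⟩ := h
  obtain ⟨l₁, l₂, rfl⟩ := List.exists_eq_append_of_mem_zip_tail hab
  exact (List.isChain_append_cons_cons.mp hZ.1.2.2).2.1

theorem exists_add_mpPow_shiftMat_nonneg_of_critEdges {a b : Fin n} (h : critEdges A lam a b) :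
    ∃ k, 0 ≤ shiftMat A (-lam) a b + mpPow (shiftMat A (-lam)) k b a := by
  obtain ⟨Z, hZ, hmean, hab⟩ := h
  obtain ⟨l₁, l₂, rfl⟩ := List.exists_eq_append_of_mem_zip_tail hab
  have hzero : walkWeight (shiftMat A (-lam)) (l₁ ++ a :: b :: l₂) = 0 := by
    rw [walkWeight_shiftMat, hmean, ← WithBot.coe_add, ← WithBot.coe_zero]
    congr 1
    ring
  set B := shiftMat A (-lam)
  obtain ⟨z, hz⟩ : ∃ z, (b :: l₂).getLast? = some z :=
    ⟨_, List.getLast?_eq_getLast_of_ne_nil (List.cons_ne_nil _ _)⟩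
  have hhead : (l₁ ++ [a]).head? = some z := by
    have hlast : (l₁ ++ a :: b :: l₂).getLast? = some z := by
      simpa [List.getLast?_cons] using hz
    rw [← hlast, ← hZ.2.2.1]
    cases l₁ <;> simp
  refine ⟨elen (b :: l₂) + elen (l₁ ++ [a]), ?_⟩
  calc 0 = walkWeight B (l₁ ++ [a]) + (B a b + walkWeight B (b :: l₂)) := by
        rw [← walkWeight_cons_cons, ← walkWeight_append_cons, hzero]
    _ = B a b + (walkWeight B (b :: l₂) + walkWeight B (l₁ ++ [a])) := by abel
    _ ≤ B a b + (mpPow B (elen (b :: l₂)) b z + mpPow B (elen (l₁ ++ [a])) z a) := by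
        gcongr
        · exact walkWeight_le_mpPow B rfl hz
        · exact walkWeight_le_mpPow B hhead (by simp)
    _ ≤ _ := by
        rw [mpPow_add]
        gcongr
        exact le_mpMul_apply _ _ _ _ _

variable (hlam : IsMaxCycleMean A lam)
include hlam

theorem walkWeight_shiftMat_nonpos_of_isCycleIn {W : List (Fin n)} (hW : IsCycleIn (digr A) W) :
    walkWeight (shiftMat A (-lam)) W ≤ 0 := by
  obtain ⟨p, hp⟩ := WithBot.ne_bot_iff_exists.mp (walkWeight_ne_bot A hW.1.2.2)
  have hl : (0 : ℝ) < elen W := by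
    have := hW.2.1
    unfold elen
    exact_mod_cast (by omega)
  have hmean : meanIs A W (p / elen W) := by rw [meanIs, ← hp, mul_div_cancel₀ _ hl.ne']
  have hle := (div_le_iff₀ hl).mp (hlam.2 W _ hW hmean)
  rw [walkWeight_shiftMat, ← hp, ← WithBot.coe_add, ← WithBot.coe_zero, WithBot.coe_le_coe]
  linarith

theorem walkWeight_shiftMat_nonpos_of_closed {W : List (Fin n)}
    (hW : W.IsChain (fun a b => A a b ≠ ⊥)) (hcl : W.head? = W.getLast?) :
    walkWeight (shiftMat A (-lam)) W ≤ 0 := by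
  induction hk : W.length using Nat.strong_induction_on generalizing W with
  | _ k ih =>
  -- either `W` is a cycle, or it splits at a repeated node into two shorter closed walks
  by_cases hnd : W.dropLast.Nodup
  · rcases W with _ | ⟨a, _ | ⟨b, l⟩⟩
    iterate 2 · simp [walkWeight]
    exact walkWeight_shiftMat_nonpos_of_isCycleIn hlam
        ⟨⟨List.cons_ne_nil _ _, fun _ _ => Set.mem_univ _, hW⟩, by simp, hcl, hnd⟩
  · have hne : W ≠ [] := by rintro rfl; simp at hnd
    obtain ⟨l₁, x, l₂, l₃, hdrop⟩ := List.exists_eq_append_of_not_nodup hnd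
    have hW' : W = l₁ ++ x :: (l₂ ++ x :: (l₃ ++ [W.getLast hne])) := by
      conv_lhs => rw [← List.dropLast_append_getLast hne, hdrop]
      simp
    rw [hW'] at hW hcl hk ⊢
    rw [walkWeight_splice]
    obtain ⟨h₁, h₂⟩ := List.isChain_split.mp hW
    obtain ⟨h₂, h₃⟩ := List.isChain_split.mp (List.cons_append .. ▸ h₂)
    refine add_nonpos (ih _ ?_ (List.isChain_split.mpr ⟨h₁, h₃⟩) ?_ rfl)
      (ih _ ?_ h₂ (by simp [List.getLast?_cons]) rfl)
    · simp [← hk]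
    · simpa [List.getLast?_cons] using hcl
    · simp only [← hk, List.length_append, List.length_cons, List.length_nil]
      omega

theorem mpPow_shiftMat_apply_self_nonpos (t : ℕ) (i : Fin n) :
    mpPow (shiftMat A (-lam)) t i i ≤ 0 := by
  rcases eq_or_ne (mpPow (shiftMat A (-lam)) t i i) ⊥ with h | h
  · exact h ▸ bot_le
  obtain ⟨W, hi, hi', hW, hw⟩ := exists_walk_of_mpPow_ne_bot _ h
  rw [← hw]
  exact walkWeight_shiftMat_nonpos_of_closed hlam
    (hW.imp fun _ _ h => shiftMat_ne_bot_iff.mp h) (hi.trans hi'.symm)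

theorem bddAbove_mpPow_shiftMat (hirr : IrreducibleMat A) (i j : Fin n) :
    BddAbove (Set.range fun t => mpPow (shiftMat A (-lam)) t i j) := by
  obtain ⟨k, hk⟩ := exists_mpPow_ne_bot_of_reachIn (shiftMat A (-lam))
    (fun _ _ h => shiftMat_ne_bot_iff.mpr h) (hirr j i)
  obtain ⟨c, hc⟩ := WithBot.ne_bot_iff_exists.mp hk
  -- the return walk `j → i` of weight `c` turns `B^(t+k)_ii ≤ 0` into `B^t_ij ≤ -c`
  refine ⟨((-c : ℝ) : WithBot ℝ), ?_⟩
  rintro _ ⟨t, rfl⟩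
  have hround : mpPow (shiftMat A (-lam)) t i j + c ≤ 0 := by
    calc _ ≤ mpPow (shiftMat A (-lam)) (t + k) i i := by
          rw [hc, mpPow_add]; exact le_mpMul_apply _ _ _ _ _
      _ ≤ 0 := mpPow_shiftMat_apply_self_nonpos hlam _ _
  simpa using add_coe_le_iff_le_add_coe_neg.mp hround

end Critical

theorem CompletelyReducible.mem_verts_of_edge {G : SubD n} (hG : CompletelyReducible G)
    {u v : Fin n} (h : G.edge u v) : u ∈ G.verts ∧ v ∈ G.verts := by
  obtain ⟨W, hW, hv, hu⟩ := hG u v h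
  exact ⟨hW.2.1 u (List.mem_of_getLast? hu), hW.2.1 v (List.mem_of_head? hv)⟩

theorem IsCycleIn.exists_edge_of_mem {G : SubD n} {Z : List (Fin n)} (hZ : IsCycleIn G Z)
    {j : Fin n} (hj : j ∈ Z) : ∃ b, G.edge j b := by
  obtain ⟨l₁, l₂, hZj⟩ := List.append_of_mem hj
  have hchain : Z.IsChain G.edge := hZ.1.2.2
  cases l₂ with
  | cons b l₂ =>
    rw [hZj] at hchain
    exact ⟨b, (List.isChain_append_cons_cons.mp hchain).2.1⟩
  | nil =>
    have hhead : Z.head? = some j := by rw [hZ.2.2.1, hZj]; simp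
    rcases Z with _ | ⟨a, _ | ⟨b, l⟩⟩
    · simp at hhead
    · simpa using hZ.2.1
    · obtain rfl : a = j := by simpa using hhead
      exact ⟨b, (List.isChain_cons_cons.mp hchain).1⟩

section CSR

variable {A : MPMat n} {lam : ℝ} {G : SubD n}

theorem csrS_le : csrS A lam G ≤ shiftMat A (-lam) := fun u v => by
  unfold csrS shiftMat
  split_ifs <;> simp

theorem edge_of_csrS_ne_bot {u v : Fin n} (h : csrS A lam G u v ≠ ⊥) : G.edge u v := by
  by_contra huv
  simp [csrS, huv] at h

theorem csrS_of_edge {u v : Fin n} (h : G.edge u v) :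
    csrS A lam G u v = shiftMat A (-lam) u v := by
  simp [csrS, shiftMat, h]

theorem csrS_ne_bot_of_edge (hGle : SubLE G (critSub A lam)) {u v : Fin n} (h : G.edge u v) :
    csrS A lam G u v ≠ ⊥ := by
  rw [csrS_of_edge h, shiftMat_ne_bot_iff]
  exact ne_bot_of_critEdges (hGle.2 u v h)

theorem mem_verts_of_mpPow_csrS_ne_bot (hGcr : CompletelyReducible G) {p : ℕ} (hp : 0 < p)
    {u v : Fin n} (h : mpPow (csrS A lam G) p u v ≠ ⊥) : u ∈ G.verts ∧ v ∈ G.verts := by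
  obtain ⟨q, rfl⟩ := Nat.exists_eq_add_one_of_ne_zero hp.ne'
  obtain ⟨w, huw, -⟩ := exists_ne_bot_of_mpMul_apply_ne_bot _ _ h
  rw [mpPow_succ'] at h
  obtain ⟨w', -, hw'v⟩ := exists_ne_bot_of_mpMul_apply_ne_bot _ _ h
  exact ⟨(hGcr.mem_verts_of_edge (edge_of_csrS_ne_bot huw)).1,
    (hGcr.mem_verts_of_edge (edge_of_csrS_ne_bot hw'v)).2⟩

variable (hlam : IsMaxCycleMean A lam) (hGle : SubLE G (critSub A lam))
include hlam hGle

theorem mpPow_csrS_apply_self_nonneg {t : ℕ} {j : Fin n}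
    (h : mpPow (csrS A lam G) t j j ≠ ⊥) : 0 ≤ mpPow (csrS A lam G) t j j := by
  have hS : ∀ u w, csrS A lam G u w ≠ ⊥ →
      ∃ k, 0 ≤ csrS A lam G u w + mpPow (shiftMat A (-lam)) k w u := fun u w h => by
    have huw := edge_of_csrS_ne_bot h
    rw [csrS_of_edge huw]
    exact exists_add_mpPow_shiftMat_nonneg_of_critEdges (hGle.2 u w huw)
  obtain ⟨k, hk⟩ := exists_add_mpPow_nonneg hS t h
  simpa using hk.trans (add_le_add_right (mpPow_shiftMat_apply_self_nonpos hlam k j) _)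

theorem exists_mpPow_csrS_apply_self_nonneg (hGcr : CompletelyReducible G)
    (hGnt : NoTrivialScc G) {j : Fin n} (hj : j ∈ G.verts) :
    ∃ t, 0 ≤ mpPow (csrS A lam G) (t + 1) j j := by
  obtain ⟨Z, hZ, hjZ⟩ := hGnt j hj
  obtain ⟨b, hjb⟩ := hZ.exists_edge_of_mem hjZ
  obtain ⟨t, ht⟩ := exists_mpPow_ne_bot_of_reachIn (csrS A lam G)
    (fun _ _ h => csrS_ne_bot_of_edge hGle h) (hGcr j b hjb)
  have hne : mpPow (csrS A lam G) (t + 1) j j ≠ ⊥ :=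
    ne_bot_of_le_ne_bot (WithBot.add_ne_bot.mpr ⟨csrS_ne_bot_of_edge hGle hjb, ht⟩)
      (le_mpMul_apply _ _ _ _ _)
  exact ⟨t, mpPow_csrS_apply_self_nonneg hlam hGle hne⟩

theorem exists_mem_verts_mpStar_le_add (hGcr : CompletelyReducible G) (hGnt : NoTrivialScc G)
    {p : ℕ} (hp : 0 < p)
    (hN : ∀ i j, BddAbove (Set.range fun t => mpPow (mpPow (shiftMat A (-lam)) p) t i j))
    (i : Fin n) {j : Fin n} (hj : j ∈ G.verts) :
    ∃ x ∈ G.verts, mpStar (mpPow (shiftMat A (-lam)) p) i j ≤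
      mpStar (mpPow (shiftMat A (-lam)) p) i x + mpPow (csrS A lam G) p x j := by
  set M := mpStar (mpPow (shiftMat A (-lam)) p)
  set P := mpPow (csrS A lam G) p
  obtain ⟨t, ht⟩ := exists_mpPow_csrS_apply_self_nonneg hlam hGle hGcr hGnt hj
  have hPt : 0 ≤ mpPow P (t + 1) j j := by
    rw [← mpPow_mul, mul_comm, mpPow_mul]
    exact mpPow_apply_self_nonneg _ ht p
  rw [mpPow_succ'] at hPt
  obtain ⟨x, hx⟩ := exists_mpMul_apply_eq (mpPow P t) P j j
  rw [hx] at hPt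
  have hxj : P x j ≠ ⊥ := (WithBot.add_ne_bot.mp (ne_bot_of_le_ne_bot (by simp) hPt)).2
  refine ⟨x, (mem_verts_of_mpPow_csrS_ne_bot hGcr hp hxj).1, ?_⟩
  calc M i j ≤ M i j + (mpPow P t j x + P x j) := le_add_of_nonneg_right hPt
    _ = (M i j + mpPow P t j x) + P x j := (add_assoc _ _ _).symm
    _ ≤ (M i j + mpPow (mpPow (shiftMat A (-lam)) p) t j x) + P x j := by
        gcongr
        exact mpPow_mono (mpPow_mono csrS_le p) t j x
    _ ≤ M i x + P x j := by
        gcongr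
        exact mpStar_add_mpPow_le hN t i j x

theorem csrC_mul_mpPow_csrS (hirr : IrreducibleMat A) (hGcr : CompletelyReducible G)
    (hGnt : NoTrivialScc G) (hγ : 0 < graphCyclicity G) :
    mpMul (csrC A lam G) (mpPow (csrS A lam G) (graphCyclicity G)) = csrC A lam G := by
  have hN (i j : Fin n) := bddAbove_range_mpPow_mpPow (bddAbove_mpPow_shiftMat hlam hirr i j)
    (graphCyclicity G)
  have hC (i j : Fin n) (hj : j ∈ G.verts) : csrC A lam G i j = csrM A lam G i j := if_pos hj
  funext i j
  apply le_antisymm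
  · refine Finset.sup_le fun k _ => ?_
    rcases eq_or_ne (mpPow (csrS A lam G) (graphCyclicity G) k j) ⊥ with h | h
    · simp [h]
    calc csrC A lam G i k + mpPow (csrS A lam G) (graphCyclicity G) k j
        ≤ csrM A lam G i k + mpPow (mpPow (shiftMat A (-lam)) (graphCyclicity G)) 1 k j := by
          gcongr
          · unfold csrC; split_ifs <;> simp
          · rw [mpPow_one]; exact mpPow_mono csrS_le _ k j
      _ ≤ csrM A lam G i j := mpStar_add_mpPow_le hN 1 i k j
      _ = csrC A lam G i j := (hC i j (mem_verts_of_mpPow_csrS_ne_bot hGcr hγ h).2).symm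
  · by_cases hj : j ∈ G.verts
    · obtain ⟨x, hx, hle⟩ := exists_mem_verts_mpStar_le_add hlam hGle hGcr hGnt hγ hN i hj
      calc csrC A lam G i j = csrM A lam G i j := hC i j hj
        _ ≤ csrC A lam G i x + mpPow (csrS A lam G) (graphCyclicity G) x j := by
          rw [hC i x hx]; exact hle
        _ ≤ _ := le_mpMul_apply _ _ _ _ _
    · simp [csrC, hj]

end CSR

/-- For irreducible `A`, the sequence `(CS^tR)_{t≥0}` is
purely periodic with period `γ(G)`. -/
theorem csr_purely_periodic {n : ℕ} (A : MPMat n) (lam : ℝ)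
    (hlam : IsMaxCycleMean A lam) (hirr : IrreducibleMat A)
    (G : SubD n) (hGle : SubLE G (critSub A lam)) (hGcr : CompletelyReducible G)
    (hGnt : NoTrivialScc G) :
    ∀ (t : ℕ) (i j : Fin n),
      csr A lam G (t + graphCyclicity G) i j = csr A lam G t i j := by
  intro t i j
  rcases Nat.eq_zero_or_pos (graphCyclicity G) with hγ | hγ
  · rw [hγ, add_zero]
  · rw [csr, csr, add_comm, mpPow_add, ← mpMul_assoc,
      csrC_mul_mpPow_csrS hlam hGle hirr hGcr hGnt hγ]

end MaxPlus
end
end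

section
/- Let G be a finite digraph on n nodes, let i be a node of G and γ ≥ 1 an integer. Then the cycle removal threshold of the single-node subgraph {i} satisfies T_cr^γ({i}) ≤ (γ−1)·ĉ(G) + (γ+1)·cd(G), where ĉ(G) is the circumference and cd(G) the cab driver's diameter of G. Concretely: every walk W from a node a to a node b passing through i, with l(W) > (γ−1)·ĉ(G) + (γ+1)·cd(G), admits a walk V from a to b passing through i, obtained from W by removing cycles, with l(V) ≡ l(W) (mod γ) and l(V) ≤ (γ−1)·ĉ(G) + (γ+1)·cd(G). -/
open Classical

noncomputable section

/-!
Split a walk `W` through `i` at `i`, and cut each half greedily into paths and cycles,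
`p₁ C₁ p₂ C₂ ⋯ p_k C_k p_{k+1}`, where any selection of the `C_j` can be removed. Each `p_j` has
length at most `cd(G)` and each `C_j` at most `ĉ(G)`, so a half with `k` cycles has length at most
`k (ĉ(G) + cd(G)) + cd(G)`. Hence if `l(W) > (γ-1)ĉ(G) + (γ+1)cd(G)`, the two halves carry at
least `γ` cycles, and by pigeonhole on prefix sums some nonempty selection of them has total length
divisible by `γ`. Removing it keeps `i` (the junction of the halves) and `l(W) mod γ` and strictly
shortens `W`; iterate.
-/

theorem List.exists_eq_append_of_not_nodup_s14 {α : Type*} {L : List α} (h : ¬ L.Nodup) :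
    ∃ pre x mid suf, L = pre ++ x :: mid ++ x :: suf ∧ (pre ++ x :: mid).Nodup := by
  induction L using List.reverseRecOn with
  | nil => exact absurd List.nodup_nil h
  | append_singleton L y ih =>
    by_cases hL : L.Nodup
    · have hy : y ∈ L := by
        by_contra hy
        exact h (by simpa using hL.concat hy)
      obtain ⟨pre, mid, rfl⟩ := List.append_of_mem hy
      exact ⟨pre, y, mid, [], by simp, hL⟩
    · obtain ⟨pre, x, mid, suf, rfl, hnd⟩ := ih hL
      exact ⟨pre, x, mid, suf ++ [y], by simp, hnd⟩

theorem List.exists_sublist_ne_nil_dvd_sum {l : List ℕ} {γ : ℕ} (hγ : 0 < γ)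
    (hl : γ ≤ l.length) : ∃ s, s.Sublist l ∧ s ≠ [] ∧ γ ∣ s.sum := by
  obtain ⟨a, ha, b, hb, hab, hmod⟩ := Finset.exists_ne_map_eq_of_card_lt_of_maps_to
    (s := Finset.range (γ + 1)) (t := Finset.range γ) (f := fun k => (l.take k).sum % γ)
    (by simp) (fun k _ => by simpa using Nat.mod_lt _ hγ)
  wlog hlt : a < b generalizing a b
  · exact this b hb a ha hab.symm hmod.symm (by omega)
  simp only [Finset.mem_range] at ha hb
  have hsplit : (l.take b).sum = (l.take a).sum + ((l.drop a).take (b - a)).sum := by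
    rw [← List.sum_append, ← List.take_add, Nat.add_sub_cancel' hlt.le]
  refine ⟨(l.drop a).take (b - a), (List.take_sublist _ _).trans (List.drop_sublist _ _),
    ?_, Nat.modEq_zero_iff_dvd.mp (Nat.ModEq.add_left_cancel' (l.take a).sum ?_)⟩
  · rw [← List.length_pos_iff, List.length_take, List.length_drop]
    omega
  · rw [← hsplit, add_zero]
    exact hmod.symm

namespace MaxPlus

variable {n : ℕ} {G : SubD n}

theorem IsWalkIn.infix {L M : List (Fin n)} (hL : IsWalkIn G L) (hM : M <:+: L) (hne : M ≠ []) :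
    IsWalkIn G M :=
  ⟨hne, fun v hv => hL.2.1 v (hM.subset hv), hL.2.2.infix hM⟩

theorem IsCycleIn.length_le_circumf_add_one {W : List (Fin n)} (h : IsCycleIn G W) :
    W.length ≤ circumf G + 1 := by
  have hbdd : BddAbove {l | ∃ W, IsCycleIn G W ∧ W.length = l + 1} := by
    refine ⟨n, fun l ⟨W', hW', hl⟩ => ?_⟩
    have := hW'.2.2.2.length_le_card
    rw [List.length_dropLast, Fintype.card_fin] at this
    omega
  have := le_csSup hbdd ⟨W, h, (Nat.sub_add_cancel (List.length_pos_iff.mpr h.1.1)).symm⟩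
  exact Nat.le_add_of_sub_le this

theorem IsPathIn.length_le_cabDiam_add_one {W : List (Fin n)} (h : IsPathIn G W) :
    W.length ≤ cabDiam G + 1 := by
  have hbdd : BddAbove {l | ∃ W, IsPathIn G W ∧ W.length = l + 1} := by
    refine ⟨n, fun l ⟨W', hW', hl⟩ => ?_⟩
    have := hW'.2.length_le_card
    rw [Fintype.card_fin] at this
    omega
  have := le_csSup hbdd ⟨W, h, (Nat.sub_add_cancel (List.length_pos_iff.mpr h.1.1)).symm⟩
  exact Nat.le_add_of_sub_le this

section RemOnly

variable {W V : List (Fin n)}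

theorem RemoveStep.head?_eq (h : RemoveStep W V) : V.head? = W.head? := by
  obtain ⟨pre, mid, post, x, rfl, rfl⟩ := h
  simp

theorem RemoveStep.getLast?_eq (h : RemoveStep W V) : V.getLast? = W.getLast? := by
  obtain ⟨pre, mid, post, x, rfl, rfl⟩ := h
  rw [List.getLast?_append_cons, List.getLast?_append_cons]

theorem RemoveStep.isWalkIn (h : RemoveStep W V) (hW : IsWalkIn G W) : IsWalkIn G V := by
  obtain ⟨pre, mid, post, x, rfl, rfl⟩ := h
  refine ⟨by simp, fun v hv => hW.2.1 v ?_, ?_⟩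
  · simp only [List.mem_append, List.mem_cons] at hv ⊢
    tauto
  · have h₁ : (pre ++ [x]).IsChain G.edge := hW.2.2.infix ⟨[], mid ++ x :: post, by simp⟩
    have h₂ : ([x] ++ post).IsChain G.edge := hW.2.2.infix ⟨pre ++ x :: mid, [], by simp⟩
    have h₃ := h₁.append_overlap h₂ (by simp)
    simp only [List.append_assoc, List.singleton_append] at h₃
    exact h₃

theorem RemOnly.head?_eq (h : RemOnly W V) : V.head? = W.head? := by
  induction h with
  | refl => rfl
  | tail _ hs ih => rw [hs.head?_eq, ih]

theorem RemOnly.getLast?_eq (h : RemOnly W V) : V.getLast? = W.getLast? := by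
  induction h with
  | refl => rfl
  | tail _ hs ih => rw [hs.getLast?_eq, ih]

theorem RemOnly.isWalkIn (h : RemOnly W V) (hW : IsWalkIn G W) : IsWalkIn G V := by
  induction h with
  | refl => exact hW
  | tail _ hs ih => exact hs.isWalkIn ih

theorem RemOnly.append_context (h : RemOnly W V) (Z Z' : List (Fin n)) :
    RemOnly (Z ++ W ++ Z') (Z ++ V ++ Z') :=
  Relation.ReflTransGen.lift (fun L => Z ++ L ++ Z')
    (fun _ _ ⟨pre, mid, post, x, hW, hV⟩ =>
      ⟨Z ++ pre, mid, post ++ Z', x, by simp [hW], by simp [hV]⟩) _ _ h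

theorem RemOnly.remIns {C : SubD n} (h : RemOnly W V) : RemIns C W V :=
  Relation.ReflTransGen.mono (fun _ _ => Or.inl) _ _ h

theorem RemOnly.exists_join {i : Fin n} {P Q V₁ V₂ : List (Fin n)}
    (h₁ : RemOnly (P ++ [i]) V₁) (h₂ : RemOnly (i :: Q) V₂) :
    ∃ V, RemOnly (P ++ i :: Q) V ∧ i ∈ V ∧ V.length + 1 = V₁.length + V₂.length := by
  obtain ⟨V₁, rfl⟩ := List.getLast?_eq_some_iff.mp (by simpa using h₁.getLast?_eq)
  obtain ⟨V₂, rfl⟩ := List.head?_eq_some_iff.mp (by simpa using h₂.head?_eq)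
  refine ⟨V₁ ++ i :: V₂, ?_, by simp, by simp; omega⟩
  have e₁ := h₁.append_context [] Q
  have e₂ := h₂.append_context V₁ []
  simp only [List.nil_append, List.append_nil, List.append_assoc, List.singleton_append]
    at e₁ e₂
  exact e₁.trans e₂

end RemOnly

/-- `cs` lists the lengths of cycles `C₁, …, C_k` in a splitting
`L = p₁ C₁ p₂ C₂ ⋯ p_k C_k p_{k+1}` with paths `p_j`; any selection of the `C_j` can be
removed. -/
def IsCycleDecomp (G : SubD n) (L : List (Fin n)) (cs : List ℕ) : Prop :=
  (∀ c ∈ cs, 0 < c ∧ c ≤ circumf G) ∧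
  L.length ≤ (circumf G + cabDiam G) * cs.length + cabDiam G + 1 ∧
  ∀ s : List ℕ, s.Sublist cs → ∃ V, RemOnly L V ∧ V.length + s.sum = L.length

theorem isCycleDecomp_nil {L : List (Fin n)} (hL : IsPathIn G L) : IsCycleDecomp G L [] :=
  ⟨by simp, by simpa using hL.length_le_cabDiam_add_one,
    fun s hs => ⟨L, .refl, by simp [List.sublist_nil.mp hs]⟩⟩

theorem IsCycleDecomp.cons {pre mid suf : List (Fin n)} {x : Fin n} {cs : List ℕ}
    (hpre : IsPathIn G (pre ++ [x])) (hcyc : IsCycleIn G (x :: mid ++ [x]))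
    (hsuf : IsCycleDecomp G (x :: suf) cs) :
    IsCycleDecomp G (pre ++ x :: mid ++ x :: suf) ((mid.length + 1) :: cs) := by
  obtain ⟨hcs, hlen, hrem⟩ := hsuf
  have hp := hpre.length_le_cabDiam_add_one
  have hc := hcyc.length_le_circumf_add_one
  simp only [List.length_append, List.length_cons, List.length_nil] at hp hc hlen
  refine ⟨?_, ?_, fun s hs => ?_⟩
  · simp only [List.mem_cons, forall_eq_or_imp]
    exact ⟨⟨Nat.succ_pos _, by omega⟩, hcs⟩
  · simp only [List.length_append, List.length_cons, Nat.mul_succ]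
    omega
  rcases List.sublist_cons_iff.mp hs with hs | ⟨r, rfl, hr⟩
  · obtain ⟨V, hV, hVlen⟩ := hrem s hs
    refine ⟨pre ++ x :: mid ++ V, by simpa using hV.append_context (pre ++ x :: mid) [], ?_⟩
    simp only [List.length_append, List.length_cons] at hVlen ⊢
    omega
  · obtain ⟨V, hV, hVlen⟩ := hrem r hr
    have hV' := hV.append_context pre []
    simp only [List.append_nil] at hV'
    refine ⟨pre ++ V, .head ⟨pre, mid, suf, x, rfl, rfl⟩ hV', ?_⟩
    simp only [List.length_append, List.length_cons, List.sum_cons] at hVlen ⊢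
    omega

theorem exists_isCycleDecomp {L : List (Fin n)} (hL : IsWalkIn G L) :
    ∃ cs, IsCycleDecomp G L cs := by
  induction' h : L.length using Nat.strong_induction_on with m ih generalizing L
  by_cases hL' : L.Nodup
  · exact ⟨[], isCycleDecomp_nil ⟨hL, hL'⟩⟩
  obtain ⟨pre, x, mid, suf, rfl, hnd⟩ := List.exists_eq_append_of_not_nodup_s14 hL'
  have hpath : IsPathIn G (pre ++ [x]) :=
    ⟨hL.infix ⟨[], mid ++ x :: suf, by simp⟩ (by simp),
      hnd.sublist ((List.singleton_sublist.mpr (List.mem_cons_self)).append_left pre)⟩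
  have hcyc : IsCycleIn G (x :: mid ++ [x]) :=
    ⟨hL.infix ⟨pre, suf, by simp⟩ (by simp), by simp, by rw [List.getLast?_concat]; rfl,
      by rw [List.dropLast_concat]; exact hnd.of_append_right⟩
  obtain ⟨cs, hcs⟩ := ih _ (by simp at h ⊢; omega)
    (hL.infix (M := x :: suf) ⟨pre ++ x :: mid, [], by simp⟩ (by simp)) rfl
  exact ⟨_, hcs.cons hpath hcyc⟩

theorem exists_remOnly_mem_modEq_elen_lt {γ : ℕ} (hγ : 0 < γ) {i : Fin n}
    {P Q : List (Fin n)} (hW : IsWalkIn G (P ++ i :: Q))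
    (hT : (γ - 1) * circumf G + (γ + 1) * cabDiam G < elen (P ++ i :: Q)) :
    ∃ V, RemOnly (P ++ i :: Q) V ∧ i ∈ V ∧ elen V ≡ elen (P ++ i :: Q) [MOD γ] ∧
      elen V < elen (P ++ i :: Q) := by
  obtain ⟨cs₁, hcs₁, hlen₁, hrem₁⟩ :=
    exists_isCycleDecomp (hW.infix (M := P ++ [i]) ⟨[], Q, by simp⟩ (by simp))
  obtain ⟨cs₂, hcs₂, hlen₂, hrem₂⟩ :=
    exists_isCycleDecomp (hW.infix (M := i :: Q) ⟨P, [], by simp⟩ (by simp))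
  have hcount : γ ≤ (cs₁ ++ cs₂).length := by
    by_contra! hlt
    have hmul : (circumf G + cabDiam G) * (cs₁ ++ cs₂).length
        ≤ (circumf G + cabDiam G) * (γ - 1) := Nat.mul_le_mul_left _ (by omega)
    have hT' : (γ - 1) * circumf G + (γ + 1) * cabDiam G
        = (circumf G + cabDiam G) * (γ - 1) + 2 * cabDiam G := by
      obtain ⟨g, rfl⟩ := Nat.exists_eq_add_of_le' hγ
      simp only [Nat.add_sub_cancel]
      ring
    simp only [elen, List.length_append, List.length_cons, List.length_nil, Nat.mul_add]
      at hT hlen₁ hlen₂ hmul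
    omega
  obtain ⟨s, hs, hsne, hdvd⟩ := List.exists_sublist_ne_nil_dvd_sum hγ hcount
  obtain ⟨s₁, s₂, rfl, hs₁, hs₂⟩ := List.sublist_append_iff.mp hs
  obtain ⟨V₁, hV₁, hV₁len⟩ := hrem₁ s₁ hs₁
  obtain ⟨V₂, hV₂, hV₂len⟩ := hrem₂ s₂ hs₂
  obtain ⟨V, hV, hiV, hVlen⟩ := hV₁.exists_join hV₂
  have hpos : 0 < (s₁ ++ s₂).sum := List.sum_pos _ (fun c hc => by
    rcases List.mem_append.mp (hs.subset hc) with hc | hc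
    exacts [(hcs₁ c hc).1, (hcs₂ c hc).1]) hsne
  have hsum : elen V + (s₁ ++ s₂).sum = elen (P ++ i :: Q) := by
    have := List.length_pos_of_mem hiV
    simp only [elen, List.sum_append, List.length_append, List.length_cons,
      List.length_nil] at hV₁len hV₂len hVlen ⊢
    omega
  refine ⟨V, hV, hiV, ?_, by omega⟩
  rw [← hsum]
  simpa using ((Nat.modEq_zero_iff_dvd.mpr hdvd).add_left (elen V)).symm

theorem exists_remOnly_mem_modEq_elen_le {γ : ℕ} (hγ : 0 < γ) {i : Fin n}
    {W : List (Fin n)} (hW : IsWalkIn G W) (hiW : i ∈ W) :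
    ∃ V, RemOnly W V ∧ i ∈ V ∧ elen V ≡ elen W [MOD γ] ∧
      elen V ≤ (γ - 1) * circumf G + (γ + 1) * cabDiam G := by
  induction' h : W.length using Nat.strong_induction_on with m ih generalizing W
  by_cases hle : elen W ≤ (γ - 1) * circumf G + (γ + 1) * cabDiam G
  · exact ⟨W, .refl, hiW, rfl, hle⟩
  obtain ⟨P, Q, rfl⟩ := List.append_of_mem hiW
  obtain ⟨V, hV, hiV, hmod, hlt⟩ := exists_remOnly_mem_modEq_elen_lt hγ hW (not_le.mp hle)
  have hVW := hV.isWalkIn hW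
  have hVlen : V.length < m := by
    have := List.length_pos_iff.mpr hVW.1
    simp only [elen] at hlt
    omega
  obtain ⟨V', hV', hiV', hmod', hle'⟩ := ih _ hVlen hVW hiV rfl
  exact ⟨V', hV.trans hV', hiV', hmod'.trans hmod, hle'⟩

theorem cycle_removal_single_node_general {n : ℕ} (G : SubD n) (i : Fin n)
    (γ : ℕ) (hγ : 1 ≤ γ) :
    TcrProp G (singleSub i) γ ((γ - 1) * circumf G + (γ + 1) * cabDiam G)
    ∧ ∀ W, IsWalkIn G W → i ∈ W →
        (γ - 1) * circumf G + (γ + 1) * cabDiam G < elen W →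
        ∃ V, RemOnly W V ∧ IsWalkIn G V ∧ i ∈ V ∧
          V.head? = W.head? ∧ V.getLast? = W.getLast? ∧
          elen V ≡ elen W [MOD γ] ∧
          elen V ≤ (γ - 1) * circumf G + (γ + 1) * cabDiam G := by
  refine ⟨fun W hW ⟨v, hv, hvW⟩ _ => ?_, fun W hW hiW _ => ?_⟩
  · obtain rfl : v = i := hv
    obtain ⟨V, hV, hiV, hmod, hle⟩ := exists_remOnly_mem_modEq_elen_le hγ hW hvW
    exact ⟨V, hV.remIns, hV.isWalkIn hW, ⟨v, rfl, hiV⟩, hV.head?_eq, hV.getLast?_eq, hmod, hle⟩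
  · obtain ⟨V, hV, hiV, hmod, hle⟩ := exists_remOnly_mem_modEq_elen_le hγ hW hiW
    exact ⟨V, hV, hV.isWalkIn hW, hiV, hV.head?_eq, hV.getLast?_eq, hmod, hle⟩

/-- `T_cr^γ({i}) ≤ (γ−1)·ĉ(G) + (γ+1)·cd(G)`; concretely,
every walk through `i` of length above this bound can be reduced, by removing
cycles only, to a walk through `i` with the same endpoints and the same length
mod `γ`, of length at most this bound. -/
theorem cycle_removal_single_node {n : ℕ} (G : SubD n) (i : Fin n) (hi : i ∈ G.verts)
    (γ : ℕ) (hγ : 1 ≤ γ) :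
    TcrProp G (singleSub i) γ ((γ - 1) * circumf G + (γ + 1) * cabDiam G)
    ∧ ∀ W, IsWalkIn G W → i ∈ W →
        (γ - 1) * circumf G + (γ + 1) * cabDiam G < elen W →
        ∃ V, RemOnly W V ∧ IsWalkIn G V ∧ i ∈ V ∧
          V.head? = W.head? ∧ V.getLast? = W.getLast? ∧
          elen V ≡ elen W [MOD γ] ∧
          elen V ≤ (γ - 1) * circumf G + (γ + 1) * cabDiam G :=
  cycle_removal_single_node_general G i γ hγ

end MaxPlus
end
end
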